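/- Let G be a finite abelian group of order n with Davenport constant D, and put m = n + D - 1. Let x = (x_1, ..., x_m) ∈ G^m be a sequence whose maximal repetition ℓ is attained by x_m, and set r = min(D, ℓ). Then there exists an n-element subset I ⊆ [1, m] with m ∈ I such that ∑_{i ∈ I} x_i = n · x_m = 0, i.e., x has a zero-sum subsequence of length n containing the term x_m. -/

import Mathlib

/-- `D` is the Davenport constant of `G`: every sequence of `D` elements has a
nonempty zero-sum subsequence, and some sequence of `D - 1` elements has none. -/
def IsDavenport (G : Type*) [AddCommGroup G] [Fintype G] [DecidableEq G] (D : ℕ) : Prop :=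
  (∀ x : Fin D → G, ∃ I : Finset (Fin D), I.Nonempty ∧ ∑ i ∈ I, x i = 0) ∧
  (∃ x : Fin (D - 1) → G, ∀ I : Finset (Fin (D - 1)), I.Nonempty → ∑ i ∈ I, x i ≠ 0)

/-!
Shift `x` by `x_m`, so that the most repeated value becomes `0`; its `ℓ` occurrences `Z` can pad
any zero-sum subsequence of length between `n - ℓ` and `n - 1` (together with `x_m`) to one of
length `n`. Off `Z`, a maximal zero-sum subsequence leaves fewer than `D` terms, hence has at
least `n - ℓ` terms. While it has at least `n` terms, it contains a nonempty zero-sum subsequence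
of at most `ℓ` terms, since no value occurs more than `ℓ` times; removing it keeps at least
`n - ℓ` terms.

The short zero-sum subsequence comes from Scherk's theorem `|A + B| ≥ |A| + |B| - 1`, valid when
`0 + 0` is the only way to write `0` as `a + b` with `a ∈ A`, `b ∈ B`: if there were none, passing from sums of at most `k` terms to
sums of at most `k + 1` terms would add at least as many new sums as there are values occurring
more than `k` times. Up to `k = ℓ` these counts add up to the number of terms, at least `n`, which
would leave more than `n` distinct sums. Scherk's theorem itself follows by induction on `|B|`
through Dyson's `e`-transform.
-/

open Finset Pointwise

section Scherk

variable {G : Type*} [AddCommGroup G] [DecidableEq G] {A B : Finset G}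

lemma card_inter_le_one_of_forall_add_mem (h : ∀ a ∈ A, ∀ b ∈ B, a + b = 0 → a = 0)
    (hstable : ∀ a ∈ A, a ≠ 0 → ∀ b ∈ B, a + b ∈ A) : #(A ∩ B) ≤ 1 := by
  suffices key : ∀ c ∈ A ∩ B, c = 0 from
    card_le_one.2 fun c hc c' hc' => by rw [key c hc, key c' hc']
  intro c hc
  rw [mem_inter] at hc
  by_contra hc0
  -- Translation by `c` maps `A \ {0}` injectively into itself while missing `c`.
  have hmaps : Set.MapsTo (· + c) (A.erase 0 : Set G) ((A.erase 0).erase c : Set G) := by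
    intro a ha
    rw [mem_coe, mem_erase] at ha
    rw [mem_coe, mem_erase, mem_erase]
    exact ⟨fun hac => ha.1 (by simpa using hac),
      fun hac => ha.1 (h a ha.2 c hc.2 hac), hstable a ha.2 ha.1 c hc.2⟩
  have hc' : c ∈ A.erase 0 := mem_erase.2 ⟨hc0, hc.1⟩
  have hle := card_le_card_of_injOn _ hmaps (add_left_injective c).injOn
  rw [card_erase_of_mem hc'] at hle
  have : 0 < #(A.erase 0) := card_pos.2 ⟨c, hc'⟩
  omega

lemma scherk_of_forall_add_mem (hA : 0 ∈ A) (hB : 0 ∈ B)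
    (h : ∀ a ∈ A, ∀ b ∈ B, a + b = 0 → a = 0) (hstable : ∀ a ∈ A, a ≠ 0 → ∀ b ∈ B, a + b ∈ A) :
    #A + #B ≤ #(A + B) + 1 := by
  have hunion : A ∪ B ⊆ A + B := union_subset
    (fun a ha => by simpa using add_mem_add ha hB) (fun b hb => by simpa using add_mem_add hA hb)
  have := card_union_add_card_inter A B
  have := card_le_card hunion
  have := card_inter_le_one_of_forall_add_mem h hstable
  omega

lemma addDysonETransform_unique_zero {e : G} (he : e ∈ A) (he0 : e ≠ 0)
    (h : ∀ a ∈ A, ∀ b ∈ B, a + b = 0 → a = 0) :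
    ∀ a ∈ (addDysonETransform e (A, B)).1, ∀ b ∈ (addDysonETransform e (A, B)).2,
      a + b = 0 → a = 0 := by
  simp only [addDysonETransform_fst, addDysonETransform_snd, mem_union, mem_inter,
    mem_neg_vadd_finset_iff]
  simp only [mem_vadd_finset, vadd_eq_add]
  rintro a (ha | ⟨c, hc, rfl⟩) b ⟨hb, heb⟩ hab
  · exact h a ha b hb hab
  · have heb0 : e + b = 0 := h _ heb c hc (by rw [← hab]; abel)
    exact absurd (h e he b hb heb0) he0

theorem scherk (hA : 0 ∈ A) (hB : 0 ∈ B) (h : ∀ a ∈ A, ∀ b ∈ B, a + b = 0 → a = 0) :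
    #A + #B ≤ #(A + B) + 1 := by
  induction hk : #B using Nat.strong_induction_on generalizing A B with
  | _ k ih =>
  subst hk
  by_cases hstable : ∀ a ∈ A, a ≠ 0 → ∀ b ∈ B, a + b ∈ A
  · exact scherk_of_forall_add_mem hA hB h hstable
  push Not at hstable
  obtain ⟨e, he, he0, b, hb, heb⟩ := hstable
  have hlt : #(addDysonETransform e (A, B)).2 < #B := card_lt_card
    ⟨inter_subset_left, fun hsub => heb (mem_neg_vadd_finset_iff.1 (mem_inter.1 (hsub hb)).2)⟩
  have := ih _ hlt (by simp [hA]) (by simp [hB, mem_neg_vadd_finset_iff, he])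
    (addDysonETransform_unique_zero he he0 h) rfl
  have : #(addDysonETransform e (A, B)).1 + #(addDysonETransform e (A, B)).2 = #A + #B :=
    addDysonETransform.card e (A, B)
  have : #((addDysonETransform e (A, B)).1 + (addDysonETransform e (A, B)).2) ≤ #(A + B) :=
    card_le_card (addDysonETransform.subset e (A, B))
  omega

end Scherk

lemma sum_Icc_card_filter_le {α : Type*} (s : Finset α) (f : α → ℕ) {h : ℕ}
    (hf : ∀ a ∈ s, f a ≤ h) : ∑ r ∈ Icc 1 h, #{a ∈ s | r ≤ f a} = ∑ a ∈ s, f a := by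
  simp_rw [card_filter]
  rw [sum_comm]
  refine sum_congr rfl fun a ha => ?_
  have hlayer : {r ∈ Icc 1 h | r ≤ f a} = Icc 1 (f a) := by
    ext r
    simp only [mem_filter, mem_Icc]
    have := hf a ha
    omega
  rw [← card_filter, hlayer, Nat.card_Icc, Nat.add_sub_cancel]

section ZeroSums

variable {ι G : Type*} [AddCommGroup G] [DecidableEq G]

def subfamilySums (y : ι → G) (A : Finset ι) (k : ℕ) : Finset G :=
  {C ∈ A.powerset | #C ≤ k}.image fun C => ∑ i ∈ C, y i

lemma mem_subfamilySums {y : ι → G} {A : Finset ι} {k : ℕ} {s : G} :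
    s ∈ subfamilySums y A k ↔ ∃ C ⊆ A, #C ≤ k ∧ ∑ i ∈ C, y i = s := by
  simp [subfamilySums, and_assoc]

lemma IsDavenport.exists_zero_sum_subset [Fintype G] {D : ℕ} (hD : IsDavenport G D)
    (y : ι → G) {P : Finset ι} (hP : D ≤ #P) : ∃ B ⊆ P, B.Nonempty ∧ ∑ i ∈ B, y i = 0 := by
  let f : Fin D ↪ ι :=
    (Fin.castLEEmb hP).trans (P.equivFin.symm.toEmbedding.trans (Function.Embedding.subtype _))
  obtain ⟨I, hI, hIsum⟩ := hD.1 (y ∘ f)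
  refine ⟨I.map f, fun i hi => ?_, hI.map, by rwa [sum_map]⟩
  obtain ⟨k, -, rfl⟩ := mem_map.1 hi
  exact (P.equivFin.symm _).2

variable [DecidableEq ι]

lemma exists_sum_eq_add_of_mem_subfamilySums {y : ι → G} {A : Finset ι} {k : ℕ} {s b : G}
    (hs : s ∈ subfamilySums y A k) (hb : k < #{i ∈ A | y i = b}) :
    ∃ C ⊆ A, C.Nonempty ∧ #C ≤ k + 1 ∧ ∑ i ∈ C, y i = s + b := by
  obtain ⟨C, hCA, hCk, rfl⟩ := mem_subfamilySums.1 hs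
  obtain ⟨i, hi, hiC⟩ :=
    exists_mem_notMem_of_card_lt_card (s := C) (t := {i ∈ A | y i = b}) (by omega)
  rw [mem_filter] at hi
  refine ⟨insert i C, insert_subset hi.1 hCA, insert_nonempty i C, ?_, ?_⟩
  · rw [card_insert_of_notMem hiC]
    omega
  · rw [sum_insert hiC, hi.2, add_comm]

lemma card_subfamilySums_add_le_card_subfamilySums_succ {y : ι → G} {A : Finset ι} {k : ℕ}
    (hA : ∀ i ∈ A, y i ≠ 0) (hno : ∀ C ⊆ A, C.Nonempty → #C ≤ k + 1 → ∑ i ∈ C, y i ≠ 0) :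
    #(subfamilySums y A k) + #{a ∈ A.image y | k + 1 ≤ #{i ∈ A | y i = a}} ≤
      #(subfamilySums y A (k + 1)) := by
  set R := {a ∈ A.image y | k + 1 ≤ #{i ∈ A | y i = a}}
  have h0R : (0 : G) ∉ R := fun h0 => by
    obtain ⟨i, hi, hi0⟩ := mem_image.1 (mem_filter.1 h0).1
    exact hA i hi hi0
  have hsub : subfamilySums y A k + insert 0 R ⊆ subfamilySums y A (k + 1) := by
    intro z hz
    obtain ⟨s, hs, b, hb, rfl⟩ := mem_add.1 hz
    rcases mem_insert.1 hb with rfl | hbR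
    · obtain ⟨C, hCA, hCk, rfl⟩ := mem_subfamilySums.1 hs
      exact mem_subfamilySums.2 ⟨C, hCA, by omega, (add_zero _).symm⟩
    · obtain ⟨C, hCA, -, hCk, hC⟩ :=
        exists_sum_eq_add_of_mem_subfamilySums hs (mem_filter.1 hbR).2
      exact mem_subfamilySums.2 ⟨C, hCA, hCk, hC⟩
  have hunique : ∀ s ∈ subfamilySums y A k, ∀ b ∈ insert 0 R, s + b = 0 → s = 0 := by
    intro s hs b hb hsb
    rcases mem_insert.1 hb with rfl | hbR
    · simpa using hsb
    · obtain ⟨C, hCA, hCne, hCk, hC⟩ :=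
        exists_sum_eq_add_of_mem_subfamilySums hs (mem_filter.1 hbR).2
      exact absurd (hC.trans hsb) (hno C hCA hCne hCk)
  have hscherk := scherk (mem_subfamilySums.2 ⟨∅, empty_subset A, by simp, by simp⟩)
    (mem_insert_self 0 R) hunique
  rw [card_insert_of_notMem h0R] at hscherk
  have := card_le_card hsub
  omega

variable [Fintype G]

theorem exists_short_zero_sum (y : ι → G) (A : Finset ι) {h : ℕ}
    (hmult : ∀ a, #{i ∈ A | y i = a} ≤ h) (hA : Fintype.card G ≤ #A) :
    ∃ C ⊆ A, C.Nonempty ∧ #C ≤ h ∧ ∑ i ∈ C, y i = 0 := by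
  by_cases h0 : ∃ i ∈ A, y i = 0
  · obtain ⟨i, hi, hi0⟩ := h0
    have : 0 < #{i ∈ A | y i = 0} := card_pos.2 ⟨i, mem_filter.2 ⟨hi, hi0⟩⟩
    exact ⟨{i}, singleton_subset_iff.2 hi, singleton_nonempty i,
      by rw [card_singleton]; exact this.trans_le (hmult 0), by rw [sum_singleton, hi0]⟩
  push Not at h0
  by_contra! hno
  have hgrowth : ∀ k ≤ h,
      1 + ∑ r ∈ Icc 1 k, #{a ∈ A.image y | r ≤ #{i ∈ A | y i = a}} ≤ #(subfamilySums y A k) := by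
    intro k
    induction k with
    | zero =>
      intro _
      simpa using card_pos.2 ⟨0, mem_subfamilySums.2 ⟨∅, empty_subset A, by simp, by simp⟩⟩
    | succ k ih =>
      intro hk
      rw [sum_Icc_succ_top (by omega)]
      have := card_subfamilySums_add_le_card_subfamilySums_succ (k := k) h0
        fun C hCA hC hCk => hno C hCA hC (by omega)
      have := ih (by omega)
      omega
  have hlayers : ∑ r ∈ Icc 1 h, #{a ∈ A.image y | r ≤ #{i ∈ A | y i = a}} = #A := by
    rw [sum_Icc_card_filter_le _ _ fun a _ => hmult a, ← card_eq_sum_card_image]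
  have := hgrowth h le_rfl
  have := card_le_univ (subfamilySums y A h)
  omega

theorem exists_zero_sum_subset_card_lt_card (y : ι → G) {A : Finset ι} {h : ℕ}
    (hmult : ∀ a, #{i ∈ A | y i = a} ≤ h) (hA : Fintype.card G ≤ #A + h)
    (hsum : ∑ i ∈ A, y i = 0) :
    ∃ A' ⊆ A, ∑ i ∈ A', y i = 0 ∧ #A' < Fintype.card G ∧ Fintype.card G ≤ #A' + h := by
  obtain ⟨A', hA', hA'min⟩ := exists_min_image
    {A' ∈ A.powerset | ∑ i ∈ A', y i = 0 ∧ Fintype.card G ≤ #A' + h} card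
    ⟨A, by simp [hsum, hA]⟩
  rw [mem_filter, mem_powerset] at hA'
  refine ⟨A', hA'.1, hA'.2.1, not_le.1 fun hGA' => ?_, hA'.2.2⟩
  obtain ⟨C, hCA', hC, hCh, hCsum⟩ := exists_short_zero_sum y A'
    (fun a => (card_le_card (filter_subset_filter _ hA'.1)).trans (hmult a)) hGA'
  have hsdiff := card_sdiff_add_card_eq_card hCA'
  have := hA'min (A' \ C) (mem_filter.2 ⟨mem_powerset.2 (sdiff_subset.trans hA'.1),
    by simpa [hCsum, hA'.2.1] using sum_sdiff hCA' (f := y), by omega⟩)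
  have := card_pos.2 hC
  omega

variable {D : ℕ}

lemma IsDavenport.exists_zero_sum_subset_card_sdiff_lt (hD : IsDavenport G D) (y : ι → G)
    (N : Finset ι) : ∃ A ⊆ N, ∑ i ∈ A, y i = 0 ∧ #(N \ A) < D := by
  obtain ⟨A, hA, hAmax⟩ := exists_max_image {A ∈ N.powerset | ∑ i ∈ A, y i = 0} card
    ⟨∅, by simp⟩
  rw [mem_filter, mem_powerset] at hA
  refine ⟨A, hA.1, hA.2, not_le.1 fun hDA => ?_⟩
  obtain ⟨B, hBN, hB, hBsum⟩ := hD.exists_zero_sum_subset y hDA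
  have hdisj : Disjoint A B := disjoint_of_subset_right hBN disjoint_sdiff
  have := hAmax (A ∪ B) <| mem_filter.2
    ⟨mem_powerset.2 (union_subset hA.1 (hBN.trans sdiff_subset)),
      by rw [sum_union hdisj, hA.2, hBsum, add_zero]⟩
  rw [card_union_of_disjoint hdisj] at this
  have := card_pos.2 hB
  omega

theorem exists_zero_sum_card_eq_card_mem [Fintype ι] (hD : IsDavenport G D)
    (hι : Fintype.card ι + 1 = Fintype.card G + D) (y : ι → G) {j : ι} (hj : y j = 0)
    (hmax : ∀ a, #{i | y i = a} ≤ #{i | y i = 0}) :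
    ∃ I : Finset ι, #I = Fintype.card G ∧ j ∈ I ∧ ∑ i ∈ I, y i = 0 := by
  set Z : Finset ι := {i | y i = 0}
  obtain ⟨A₁, hA₁, hA₁sum, hA₁card⟩ := hD.exists_zero_sum_subset_card_sdiff_lt y Zᶜ
  have hZ : #Zᶜ + #Z = Fintype.card ι := card_compl_add_card Z
  have := card_sdiff_add_card_eq_card hA₁
  obtain ⟨A, hA, hAsum, hAlt, hAge⟩ := exists_zero_sum_subset_card_lt_card y
    (fun a => (card_le_card (filter_subset_filter _ (subset_univ A₁))).trans (hmax a))
    (by omega) hA₁sum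
  obtain ⟨W, hjW, hWZ, hWcard⟩ := exists_subsuperset_card_eq (s := {j}) (t := Z)
    (n := Fintype.card G - #A) (by simpa [Z] using hj) (by simp; omega) (by omega)
  have hdisj : Disjoint A W :=
    disjoint_of_subset_left (hA.trans hA₁) (disjoint_compl_left.mono_right hWZ)
  refine ⟨A ∪ W, by rw [card_union_of_disjoint hdisj]; omega,
    mem_union_right _ (by simpa using hjW), ?_⟩
  rw [sum_union hdisj, hAsum, zero_add]
  exact sum_eq_zero fun i hi => (mem_filter.1 (hWZ hi)).2

end ZeroSums

theorem stmt_13_general {G : Type*} [AddCommGroup G] [Fintype G] [DecidableEq G] (n D ℓ m : ℕ)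
    (hn : Fintype.card G = n) (hD : IsDavenport G D) (hm : m = n + D - 1)
    (x : Fin m → G) (j : Fin m)
    (hℓ : (Finset.univ.filter (fun i => x i = x j)).card = ℓ)
    (hmax : ∀ a : G, (Finset.univ.filter (fun i => x i = a)).card ≤ ℓ) :
    ∃ I : Finset (Fin m), I.card = n ∧ j ∈ I ∧
      ∑ i ∈ I, x i = n • x j ∧ (n • x j : G) = 0 := by
  subst hn
  have hcard : Fintype.card (Fin m) + 1 = Fintype.card G + D := by
    have := Fintype.card_pos (α := G)
    rw [Fintype.card_fin]
    omega
  obtain ⟨I, hIcard, hjI, hIsum⟩ := exists_zero_sum_card_eq_card_mem hD hcard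
    (fun i => x i - x j) (sub_self (x j)) fun a => by
      simpa only [sub_eq_iff_eq_add, zero_add, hℓ] using hmax (a + x j)
  refine ⟨I, hIcard, hjI, ?_, card_nsmul_eq_zero⟩
  rwa [sum_sub_distrib, sum_const, hIcard, sub_eq_zero] at hIsum

theorem stmt_13 {G : Type*} [AddCommGroup G] [Fintype G] [DecidableEq G] (n D ℓ m r : ℕ)
    (hn : Fintype.card G = n) (hD : IsDavenport G D) (hm : m = n + D - 1)
    (x : Fin m → G) (j : Fin m) (hj : (j : ℕ) = m - 1)
    (hℓ : (Finset.univ.filter (fun i => x i = x j)).card = ℓ)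
    (hmax : ∀ a : G, (Finset.univ.filter (fun i => x i = a)).card ≤ ℓ)
    (hr : r = min D ℓ) :
    ∃ I : Finset (Fin m), I.card = n ∧ j ∈ I ∧
      ∑ i ∈ I, x i = n • x j ∧ (n • x j : G) = 0 :=
  stmt_13_general n D ℓ m hn hD hm x j hℓ hmax
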